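/- Polyhedral characterization of the IBC TIN-achievable GDoF region under the TIN-optimality conditions (region part of Theorem 2): suppose the channel strength levels satisfy (i) α_{ii}^{[2]} ≥ α_{ii}^{[1]} + max over j≠i of α_{ij}^{[2]} for all cells i, and (ii) α_{ii}^{[l_i]} ≥ (max over j≠i of α_{ij}^{[l_i]}) + (max over pairs (l_k,k) with k≠i of α_{ki}^{[l_k]}) for all cells i and l_i ∈ {1,2}. Then the general TIN-achievable GDoF region P^IBC⋆ equals the set of tuples d ∈ ℝ^{2K} satisfying: d_i^{[l_i]} ≥ 0 for all i and l_i; for every i and l_i ∈ {1,2}, the sum over s ∈ {1,…,l_i} of d_i^{[s]} is at most α_{ii}^{[l_i]}; and for every m ∈ {2,…,K}, every sequence (i_1,…,i_m) of m distinct cells (taken cyclically, with i_0 = i_m), and every choice of l_{i_j} ∈ {1,2} for j = 1,…,m, the sum over j ∈ {1,…,m} of the sum over s ∈ {1,…,l_{i_j}} of d_{i_j}^{[s]} is at most the sum over j ∈ {1,…,m} of (α_{i_j i_j}^{[l_{i_j}]} − α_{i_j i_{j−1}}^{[l_{i_j}]}). -/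

import Mathlib

/-!
Converse. In each cell, successive decoding bounds the cumulative GDoF
`D_k^{[l]} = ∑_{s ≤ l} d_k^{[s]}` by `max 0 (α_kk^{[l]} + ρ_k - (α_kj^{[l]} + ρ_j)⁺)` for every
other cell `j`, where `ρ_k` is the larger power exponent in cell `k`; when the strong user is
decoded first this uses condition (i). Since `(α_kj + ρ_j)⁺ = α_kj + max ρ_j (-α_kj)`, these
bounds telescope around a cycle of cells, and condition (ii) pays for the terms cut off at `0`.

Achievability. Decode the weak user first and give cell `k` the power exponents `x_k` and
`x_k - d_k^{[1]}`, where `x` is a longest-path potential of the complete graph on the cells with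
edge weights `max_l (D_k^{[l]} - α_kk^{[l]} + α_kj^{[l]})` and root weights
`max_l (D_k^{[l]} - α_kk^{[l]})`. The cyclic constraints say that this graph has no positive cycle,
so the potential exists, and the per-cell constraints make it nonpositive.
-/

open Finset

/-- Positive part: `(x)⁺ = max {x, 0}`. -/
noncomputable def pplus (x : ℝ) : ℝ := max x 0

/-- Maximum over all pairs `(l, j)` with `j ≠ k` of `f j l`. -/
noncomputable def crossMax {K : ℕ} (hK : 2 ≤ K) (k : Fin K)
    (f : Fin K → Fin 2 → ℝ) : ℝ :=
  (Finset.univ.filter (fun p : Fin K × Fin 2 => p.1 ≠ k)).sup'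
    (by
      haveI : Nontrivial (Fin K) := Fin.nontrivial_iff_two_le.mpr hK
      obtain ⟨j, hj⟩ := exists_ne k
      exact ⟨(j, (0 : Fin 2)), by simp [hj]⟩)
    (fun p => f p.1 p.2)

/-- Minimum over all pairs `(l, j)` with `j ≠ k` of `f j l`. -/
noncomputable def crossMin {K : ℕ} (hK : 2 ≤ K) (k : Fin K)
    (f : Fin K → Fin 2 → ℝ) : ℝ :=
  (Finset.univ.filter (fun p : Fin K × Fin 2 => p.1 ≠ k)).inf'
    (by
      haveI : Nontrivial (Fin K) := Fin.nontrivial_iff_two_le.mpr hK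
      obtain ⟨j, hj⟩ := exists_ne k
      exact ⟨(j, (0 : Fin 2)), by simp [hj]⟩)
    (fun p => f p.1 p.2)

/-- Maximum over all cells `j ≠ i` of `f j`. -/
noncomputable def cellMax {K : ℕ} (hK : 2 ≤ K) (i : Fin K)
    (f : Fin K → ℝ) : ℝ :=
  (Finset.univ.filter (fun j : Fin K => j ≠ i)).sup'
    (by
      haveI : Nontrivial (Fin K) := Fin.nontrivial_iff_two_le.mpr hK
      obtain ⟨j, hj⟩ := exists_ne i
      exact ⟨j, by simp [hj]⟩)
    f

/-- IBC TIN upper bound on the GDoF of the first-decoded user of cell `k`.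
Users are indexed by `Fin 2` (user `0` is UE 1, user `1` is UE 2);
`π k 0` and `π k 1` are the first and second decoded users of cell `k`. -/
noncomputable def ibcBound1 {K : ℕ} (hK : 2 ≤ K) (α : Fin K → Fin K → Fin 2 → ℝ)
    (π : Fin K → Equiv.Perm (Fin 2)) (r : Fin K → Fin 2 → ℝ) (k : Fin K) : ℝ :=
  max 0 (min
    (α k k (π k 0) + r k (π k 0) -
      pplus (max (α k k (π k 0) + r k (π k 1))
        (crossMax hK k (fun j l => α k j (π k 0) + r j l))))
    (α k k (π k 1) + r k (π k 0) -
      pplus (max (α k k (π k 1) + r k (π k 1))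
        (crossMax hK k (fun j l => α k j (π k 1) + r j l)))))

/-- IBC TIN upper bound on the GDoF of the second-decoded user of cell `k`. -/
noncomputable def ibcBound2 {K : ℕ} (hK : 2 ≤ K) (α : Fin K → Fin K → Fin 2 → ℝ)
    (π : Fin K → Equiv.Perm (Fin 2)) (r : Fin K → Fin 2 → ℝ) (k : Fin K) : ℝ :=
  max 0 (α k k (π k 1) + r k (π k 1) -
    pplus (crossMax hK k (fun j l => α k j (π k 1) + r j l)))

/-- The IBC TIN region `P^IBC_π(r)`. -/
noncomputable def IBCr {K : ℕ} (hK : 2 ≤ K) (α : Fin K → Fin K → Fin 2 → ℝ)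
    (π : Fin K → Equiv.Perm (Fin 2)) (r : Fin K → Fin 2 → ℝ) :
    Set (Fin K → Fin 2 → ℝ) :=
  {d | ∀ k : Fin K,
    (0 ≤ d k (π k 0) ∧ d k (π k 0) ≤ ibcBound1 hK α π r k) ∧
    (0 ≤ d k (π k 1) ∧ d k (π k 1) ≤ ibcBound2 hK α π r k)}

/-- The general TIN-achievable GDoF region of the IBC, `P^IBC⋆`. -/
noncomputable def IBCstar {K : ℕ} (hK : 2 ≤ K) (α : Fin K → Fin K → Fin 2 → ℝ) :
    Set (Fin K → Fin 2 → ℝ) :=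
  {d | ∃ π : Fin K → Equiv.Perm (Fin 2), ∃ r : Fin K → Fin 2 → ℝ,
    (∀ k l, r k l ≤ 0) ∧ d ∈ IBCr hK α π r}

/-- IMAC TIN upper bound on the GDoF of user `π k 0` (decoded last) of cell `k`. -/
noncomputable def imacBound1 {K : ℕ} (hK : 2 ≤ K) (α : Fin K → Fin K → Fin 2 → ℝ)
    (π : Fin K → Equiv.Perm (Fin 2)) (r : Fin K → Fin 2 → ℝ) (k : Fin K) : ℝ :=
  max 0 (α k k (π k 0) + r k (π k 0) -
    pplus (crossMax hK k (fun j l => α j k l + r j l)))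

/-- IMAC TIN upper bound on the GDoF of user `π k 1` of cell `k`. -/
noncomputable def imacBound2 {K : ℕ} (hK : 2 ≤ K) (α : Fin K → Fin K → Fin 2 → ℝ)
    (π : Fin K → Equiv.Perm (Fin 2)) (r : Fin K → Fin 2 → ℝ) (k : Fin K) : ℝ :=
  max 0 (α k k (π k 1) + r k (π k 1) -
    pplus (max (α k k (π k 0) + r k (π k 0))
      (crossMax hK k (fun j l => α j k l + r j l))))

/-- The IMAC TIN region `P^IMAC_π(r̄)`. -/
noncomputable def IMACr {K : ℕ} (hK : 2 ≤ K) (α : Fin K → Fin K → Fin 2 → ℝ)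
    (π : Fin K → Equiv.Perm (Fin 2)) (r : Fin K → Fin 2 → ℝ) :
    Set (Fin K → Fin 2 → ℝ) :=
  {d | ∀ k : Fin K,
    (0 ≤ d k (π k 0) ∧ d k (π k 0) ≤ imacBound1 hK α π r k) ∧
    (0 ≤ d k (π k 1) ∧ d k (π k 1) ≤ imacBound2 hK α π r k)}

/-- The general TIN-achievable GDoF region of the IMAC, `P^IMAC⋆`. -/
noncomputable def IMACstar {K : ℕ} (hK : 2 ≤ K) (α : Fin K → Fin K → Fin 2 → ℝ) :
    Set (Fin K → Fin 2 → ℝ) :=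
  {d | ∃ π : Fin K → Equiv.Perm (Fin 2), ∃ r : Fin K → Fin 2 → ℝ,
    (∀ k l, r k l ≤ 0) ∧ d ∈ IMACr hK α π r}

/-- `betaD hK α π r k l = β_k^{[π_k(l+1)]}`, indexed by decoding position `l : Fin 2`. -/
noncomputable def betaD {K : ℕ} (hK : 2 ≤ K) (α : Fin K → Fin K → Fin 2 → ℝ)
    (π : Fin K → Equiv.Perm (Fin 2)) (r : Fin K → Fin 2 → ℝ)
    (k : Fin K) (l : Fin 2) : ℝ :=
  if l = 0 then
    min
      (min (min (α k k (π k 0)) (-(r k (π k 1))))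
        (α k k (π k 0) - crossMax hK k (fun j l' => α k j (π k 0) + r j l')))
      (min (min (α k k (π k 1)) (-(r k (π k 1))))
        (α k k (π k 1) - crossMax hK k (fun j l' => α k j (π k 1) + r j l')))
  else
    min (α k k (π k 1))
      (α k k (π k 1) - crossMax hK k (fun j l' => α k j (π k 1) + r j l'))

/-- The dual uplink power allocation `r̄_k^{[π_k(l)]} = −α_{kk}^{[π_k(l)]} + β_k^{[π_k(l)]}`,
expressed as a function of the user index `u`. -/
noncomputable def rbarDual {K : ℕ} (hK : 2 ≤ K) (α : Fin K → Fin K → Fin 2 → ℝ)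
    (π : Fin K → Equiv.Perm (Fin 2)) (r : Fin K → Fin 2 → ℝ)
    (k : Fin K) (u : Fin 2) : ℝ :=
  -α k k u + betaD hK α π r k ((π k).symm u)

/-- `gammaD hK α π r k l = γ_k^{[π_k(l+1)]}`, indexed by decoding position `l : Fin 2`. -/
noncomputable def gammaD {K : ℕ} (hK : 2 ≤ K) (α : Fin K → Fin K → Fin 2 → ℝ)
    (π : Fin K → Equiv.Perm (Fin 2)) (r : Fin K → Fin 2 → ℝ)
    (k : Fin K) (l : Fin 2) : ℝ :=
  if l = 0 then
    max 0 (crossMax hK k (fun j l' => α j k l' + r j l'))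
  else
    max (max 0 (α k k (π k 0) + r k (π k 0)))
      (crossMax hK k (fun j l' => α j k l' + r j l'))

/-- `γ_j^{[u]}` indexed by the user index `u`. -/
noncomputable def gammaU {K : ℕ} (hK : 2 ≤ K) (α : Fin K → Fin K → Fin 2 → ℝ)
    (π : Fin K → Equiv.Perm (Fin 2)) (r : Fin K → Fin 2 → ℝ)
    (j : Fin K) (u : Fin 2) : ℝ :=
  gammaD hK α π r j ((π j).symm u)

lemma sum_comp_finRotate_succ {ι M : Type*} [AddCommMonoid M] {n : ℕ} (g : ι → ι → M)
    (v : Fin (n + 1) → ι) :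
    ∑ i, g (v i) (v (finRotate (n + 1) i)) =
      ∑ i : Fin n, g (v i.castSucc) (v i.succ) + g (v (Fin.last n)) (v 0) := by
  simp [Fin.sum_univ_castSucc, Fin.coeSucc_eq_succ]

lemma neg_finRotate_symm_apply {n : ℕ} (i : Fin (n + 1)) :
    -((finRotate (n + 1)).symm i) = finRotate (n + 1) (-i) := by
  simp only [finRotate_symm_apply, finRotate_apply]
  abel

lemma finRotate_apply_ne_self {m : ℕ} (hm : 2 ≤ m) (i : Fin m) : finRotate m i ≠ i := by
  rw [← Equiv.Perm.mem_support, support_finRotate_of_le hm]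
  exact Finset.mem_univ i

lemma finRotate_symm_apply_ne_self {m : ℕ} (hm : 2 ≤ m) (i : Fin m) :
    (finRotate m).symm i ≠ i := by
  rw [Ne, Equiv.symm_apply_eq]
  exact (finRotate_apply_ne_self hm i).symm

lemma sum_le_sum_of_le_add_sub_perm {ι : Type*} [Fintype ι] {f g v : ι → ℝ}
    (σ : Equiv.Perm ι) (h : ∀ i, f i ≤ g i + (v i - v (σ i))) : ∑ i, f i ≤ ∑ i, g i :=
  calc ∑ i, f i ≤ ∑ i, (g i + (v i - v (σ i))) := Finset.sum_le_sum fun i _ => h i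
    _ = ∑ i, g i := by
      rw [Finset.sum_add_distrib, Finset.sum_sub_distrib, Equiv.sum_comp, sub_self, add_zero]

section Potential

variable {ι : Type*} (w : ι → ι → ℝ)

def walkValue (c : ι → ℝ) : ι → List ι → ℝ
  | a, [] => c a
  | a, b :: l => w a b + walkValue c b l

lemma walkValue_append_cons (c : ι → ℝ) (a b : ι) (s t : List ι) :
    walkValue w c a (s ++ b :: t) = walkValue w (w · b) a s + walkValue w c b t := by
  induction s generalizing a with
  | nil => rfl
  | cons e s ih => simp only [List.cons_append, walkValue, ih, add_assoc]

lemma walkValue_eq_sum (c : ι → ℝ) (a : ι) (l : List ι) :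
    walkValue w c a l = ∑ i : Fin l.length, w ((a :: l).get i.castSucc) ((a :: l).get i.succ) +
      c ((a :: l).get (Fin.last _)) := by
  induction l generalizing a with
  | nil => simp [walkValue]
  | cons b l ih =>
    rw [walkValue, ih]
    simp [Fin.sum_univ_succ, add_assoc]

variable {w}
variable (hcycle : ∀ m, 2 ≤ m → ∀ v : Fin m → ι, Function.Injective v →
  ∑ i, w (v i) (v (finRotate m i)) ≤ 0)
include hcycle

lemma walkValue_nonpos_of_cycle {c : ι → ℝ} {a : ι} (hc : ∀ b, b ≠ a → c b ≤ w b a)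
    {l : List ι} (hl : (a :: l).Nodup) (hl0 : l ≠ []) : walkValue w c a l ≤ 0 := by
  have hinj : Function.Injective (a :: l).get := List.nodup_iff_injective_get.mp hl
  have hlast : (a :: l).get (Fin.last l.length) ≠ a := fun h =>
    hl0 (List.length_eq_zero_iff.mp (Fin.last_eq_zero_iff.mp
      (hinj (h : (a :: l).get (Fin.last _) = (a :: l).get 0))))
  have hcyc := hcycle (l.length + 1) (Nat.succ_le_succ (List.length_pos_iff.mpr hl0))
    (fun i : Fin (l.length + 1) => (a :: l).get i) hinj
  rw [sum_comp_finRotate_succ, List.get_cons_zero] at hcyc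
  rw [walkValue_eq_sum]
  linarith [hc _ hlast]

lemma walkValue_nonpos_of_nodup {c : ι → ℝ} (hc : ∀ a, c a ≤ 0)
    (hcw : ∀ a b, a ≠ b → c a ≤ w a b) {a : ι} {l : List ι} (hl : (a :: l).Nodup) :
    walkValue w c a l ≤ 0 := by
  rcases eq_or_ne l [] with rfl | hl0
  · exact hc a
  · exact walkValue_nonpos_of_cycle hcycle (fun b hb => hcw b a hb) hl hl0

theorem exists_potential_of_cycle_nonpos {c : ι → ℝ} (hc : ∀ a, c a ≤ 0)
    (hcw : ∀ a b, a ≠ b → c a ≤ w a b) :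
    ∃ x : ι → ℝ, (∀ a, x a ≤ 0) ∧ (∀ a, c a ≤ x a) ∧ ∀ a b, a ≠ b → w a b + x b ≤ x a := by
  let x a := ⨆ l : {l : List ι // (a :: l).Nodup}, walkValue w c a l
  have (a : ι) : Nonempty {l : List ι // (a :: l).Nodup} := ⟨⟨[], List.nodup_singleton a⟩⟩
  have hbdd (a : ι) :
      BddAbove (Set.range fun l : {l : List ι // (a :: l).Nodup} => walkValue w c a l) :=
    ⟨0, Set.forall_mem_range.mpr fun l => walkValue_nonpos_of_nodup hcycle hc hcw l.2⟩
  have le_x {a : ι} {l : List ι} (hl : (a :: l).Nodup) : walkValue w c a l ≤ x a :=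
    le_ciSup (hbdd a) ⟨l, hl⟩
  refine ⟨x, fun a => ciSup_le fun l => walkValue_nonpos_of_nodup hcycle hc hcw l.2,
    fun a => le_x (List.nodup_singleton a), fun a b hab => ?_⟩
  rw [← le_sub_iff_add_le']
  refine ciSup_le fun ⟨l, hl⟩ => le_sub_iff_add_le'.mpr ?_
  by_cases ha : a ∈ l
  · -- Cut the path at `a`: the part before `a`, closed by the edge `a → b`, is a cycle.
    obtain ⟨s, t, rfl⟩ := List.append_of_mem ha
    have hs : (a :: b :: s).Nodup := by
      have := hl.sublist (List.sublist_append_left (b :: s ++ [a]) t |>.trans (by simp))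
      exact (List.perm_append_singleton a (b :: s)).nodup_iff.mp this
    have ht : (a :: t).Nodup := hl.sublist ((List.sublist_append_right s _).cons b)
    have hcyc := walkValue_nonpos_of_cycle hcycle (c := (w · a)) (fun _ _ => le_rfl) hs
      (List.cons_ne_nil b s)
    rw [walkValue] at hcyc
    rw [walkValue_append_cons]
    linarith [le_x ht]
  · simpa only [walkValue] using le_x (l := b :: l) (List.nodup_cons.mpr ⟨by simp [hab, ha], hl⟩)

end Potential

lemma pplus_nonneg (x : ℝ) : 0 ≤ pplus x := le_max_right x 0

lemma le_pplus (x : ℝ) : x ≤ pplus x := le_max_left x 0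

lemma pplus_le_pplus {x y : ℝ} (h : x ≤ y) : pplus x ≤ pplus y := max_le_max_right 0 h

lemma pplus_le {x y : ℝ} (h : x ≤ y) (h0 : 0 ≤ y) : pplus x ≤ y := max_le h h0

lemma pplus_add_eq_add_max (a ρ : ℝ) : pplus (a + ρ) = a + max ρ (-a) := by
  rw [pplus, add_max, add_neg_cancel]

lemma add_sub_pplus_max_le_min (a u v M : ℝ) :
    a + u - pplus (max (a + v) M) ≤ min (u - v) (a - pplus M + u) :=
  le_min (by linarith [(le_max_left (a + v) M).trans (le_pplus _)])
    (by linarith [pplus_le_pplus (le_max_right (a + v) M)])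

lemma add_le_max_zero_add_max {x y u v P : ℝ} (hx : x ≤ max 0 (min (u - v) (P + u)))
    (hy : y ≤ max 0 (P + v)) : x + y ≤ max 0 (P + max u v) := by
  rcases le_total (P + v) 0 with hv | hv
  · rw [max_eq_left hv] at hy
    have : min (u - v) (P + u) ≤ P + max u v :=
      (min_le_right _ _).trans (by linarith [le_max_left u v])
    linarith [max_le_max (le_refl (0 : ℝ)) this]
  · rw [max_eq_right hv] at hy
    have : max 0 (u - v) ≤ max u v - v :=
      max_le (by linarith [le_max_right u v]) (by linarith [le_max_left u v])
    linarith [max_le_max (le_refl (0 : ℝ)) (min_le_left (u - v) (P + u)),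
      le_max_right 0 (P + max u v)]

section CellMaxima

variable {K : ℕ} (hK : 2 ≤ K)

lemma le_crossMax {k j : Fin K} (hj : j ≠ k) (f : Fin K → Fin 2 → ℝ) (l : Fin 2) :
    f j l ≤ crossMax hK k f :=
  Finset.le_sup' (fun p : Fin K × Fin 2 => f p.1 p.2)
    (Finset.mem_filter.mpr ⟨Finset.mem_univ (j, l), hj⟩)

lemma crossMax_le {k : Fin K} {f : Fin K → Fin 2 → ℝ} {x : ℝ}
    (h : ∀ j, j ≠ k → ∀ l, f j l ≤ x) : crossMax hK k f ≤ x :=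
  Finset.sup'_le _ _ fun p hp => h p.1 (Finset.mem_filter.mp hp).2 p.2

lemma le_cellMax {i j : Fin K} (hj : j ≠ i) (f : Fin K → ℝ) : f j ≤ cellMax hK i f :=
  Finset.le_sup' f (Finset.mem_filter.mpr ⟨Finset.mem_univ j, hj⟩)

lemma cellMax_nonneg (i : Fin K) {f : Fin K → ℝ} (hf : ∀ j, 0 ≤ f j) : 0 ≤ cellMax hK i f := by
  have : Nontrivial (Fin K) := Fin.nontrivial_iff_two_le.mpr hK
  obtain ⟨j, hj⟩ := exists_ne i
  exact (hf j).trans (le_cellMax hK hj f)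

end CellMaxima

def cumDoF {K : ℕ} (d : Fin K → Fin 2 → ℝ) (k : Fin K) (li : Fin 2) : ℝ :=
  ∑ s ∈ Finset.univ.filter (fun s : Fin 2 => s ≤ li), d k s

lemma cumDoF_zero {K : ℕ} (d : Fin K → Fin 2 → ℝ) (k : Fin K) : cumDoF d k 0 = d k 0 := by
  rw [cumDoF, show Finset.univ.filter (fun s : Fin 2 => s ≤ 0) = {0} by decide, sum_singleton]

lemma cumDoF_one {K : ℕ} (d : Fin K → Fin 2 → ℝ) (k : Fin K) :
    cumDoF d k 1 = d k 0 + d k 1 := by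
  rw [cumDoF, show Finset.univ.filter (fun s : Fin 2 => s ≤ 1) = univ by decide, Fin.sum_univ_two]

section Converse

variable {K : ℕ} (hK : 2 ≤ K) {α : Fin K → Fin K → Fin 2 → ℝ} {π : Fin K → Equiv.Perm (Fin 2)}
  {r : Fin K → Fin 2 → ℝ} {d : Fin K → Fin 2 → ℝ} (hα : ∀ k i l, 0 ≤ α k i l)
  (h1 : ∀ i : Fin K, α i i 0 + cellMax hK i (fun j => α i j 1) ≤ α i i 1)
  (hr : ∀ k l, r k l ≤ 0)
include hα h1 hr

lemma pplus_crossMax_le_sub (k : Fin K) :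
    pplus (crossMax hK k fun j l => α k j 1 + r j l) ≤ α k k 1 - α k k 0 := by
  have := h1 k
  refine pplus_le (crossMax_le hK fun j hj l => ?_) ?_
  · linarith [le_cellMax hK hj (fun j => α k j 1), hr j l]
  · linarith [cellMax_nonneg hK k (fun j => hα k j 1)]

variable (hd : d ∈ IBCr hK α π r)
include hd

lemma cumDoF_le_of_mem_IBCr (k : Fin K) (li : Fin 2) :
    cumDoF d k li ≤ max 0 (α k k li + max (r k 0) (r k 1) -
      pplus (crossMax hK k fun j l => α k j li + r j l)) := by
  obtain ⟨⟨-, hfirst⟩, -, hsecond⟩ := hd k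
  set M : Fin 2 → ℝ := fun li => crossMax hK k fun j l => α k j li + r j l
  have hρ0 := le_max_left (r k 0) (r k 1)
  have hρ1 := le_max_right (r k 0) (r k 1)
  obtain ⟨hπ0, hπ1⟩ | ⟨hπ0, hπ1⟩ : (π k 0 = 0 ∧ π k 1 = 1) ∨ (π k 0 = 1 ∧ π k 1 = 0) := by
    generalize π k = e; revert e; decide
  all_goals
    simp only [ibcBound1, ibcBound2, hπ0, hπ1] at hfirst hsecond
    obtain rfl | rfl : li = 0 ∨ li = 1 := by omega
  · rw [cumDoF_zero]
    refine hfirst.trans (max_le_max le_rfl ((min_le_left _ _).trans ?_))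
    linarith [pplus_le_pplus (le_max_right (α k k 0 + r k 1) (M 0))]
  · rw [cumDoF_one]
    have hd0 := hfirst.trans (max_le_max le_rfl ((min_le_right _ _).trans
      (add_sub_pplus_max_le_min (α k k 1) (r k 0) (r k 1) (M 1))))
    have hd1 : d k 1 ≤ max 0 (α k k 1 - pplus (M 1) + r k 1) := by
      rwa [sub_add_eq_add_sub]
    convert add_le_max_zero_add_max hd0 hd1 using 2
    ring
  · rw [cumDoF_zero]
    exact hsecond.trans (max_le_max le_rfl (by linarith))
  · rw [cumDoF_one, add_comm]
    have hd1 := hfirst.trans (max_le_max le_rfl ((min_le_left _ _).trans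
      (add_sub_pplus_max_le_min (α k k 1) (r k 1) (r k 0) (M 1))))
    have hd0 : d k 0 ≤ max 0 (α k k 1 - pplus (M 1) + r k 0) :=
      hsecond.trans (max_le_max le_rfl (by
        linarith [pplus_nonneg (M 0), pplus_crossMax_le_sub hK hα h1 hr k]))
    convert add_le_max_zero_add_max hd1 hd0 using 2
    rw [max_comm]; ring

lemma cumDoF_le_direct_of_mem_IBCr (k : Fin K) (li : Fin 2) :
    cumDoF d k li ≤ α k k li :=
  (cumDoF_le_of_mem_IBCr hK hα h1 hr hd k li).trans <| max_le (hα k k li) <| by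
    linarith [pplus_nonneg (crossMax hK k fun j l => α k j li + r j l), max_le (hr k 0) (hr k 1)]

lemma cumDoF_le_of_mem_IBCr_of_ne {j k : Fin K} (hjk : j ≠ k) (li : Fin 2) :
    cumDoF d k li ≤ max 0 (α k k li + max (r k 0) (r k 1) -
      pplus (α k j li + max (r j 0) (r j 1))) := by
  refine (cumDoF_le_of_mem_IBCr hK hα h1 hr hd k li).trans
    (max_le_max le_rfl (sub_le_sub_left (pplus_le_pplus ?_) _))
  rw [add_max]
  exact max_le (le_crossMax hK hjk (fun j l => α k j li + r j l) 0)
    (le_crossMax hK hjk (fun j l => α k j li + r j l) 1)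

lemma sum_cumDoF_le_of_mem_IBCr
    (h2 : ∀ i : Fin K, ∀ li : Fin 2,
      cellMax hK i (fun j => α i j li) + crossMax hK i (fun j l => α j i l) ≤ α i i li)
    {m : ℕ} (hm : 2 ≤ m) {c : Fin m → Fin K} (hc : Function.Injective c) (ℓ : Fin m → Fin 2) :
    ∑ j, cumDoF d (c j) (ℓ j) ≤
      ∑ j, (α (c j) (c j) (ℓ j) - α (c j) (c ((finRotate m).symm j)) (ℓ j)) := by
  set σ := finRotate m
  -- With this `v`, the positive part in the bound for cell `c i` is exactly `α + v (σ.symm i)`.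
  let v i := max (max (r (c i) 0) (r (c i) 1)) (-α (c (σ i)) (c i) (ℓ (σ i)))
  refine sum_le_sum_of_le_add_sub_perm σ.symm (v := v) fun i => ?_
  have hprev : c (σ.symm i) ≠ c i := hc.ne (finRotate_symm_apply_ne_self hm i)
  have hnext : c (σ i) ≠ c i := hc.ne (finRotate_apply_ne_self hm i)
  have hv : v (σ.symm i) = max (max (r (c (σ.symm i)) 0) (r (c (σ.symm i)) 1))
      (-α (c i) (c (σ.symm i)) (ℓ i)) := by
    simp only [v, Equiv.apply_symm_apply]
  have hbound := cumDoF_le_of_mem_IBCr_of_ne hK hα h1 hr hd hprev (ℓ i)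
  rw [pplus_add_eq_add_max, ← hv] at hbound
  refine hbound.trans (max_le ?_ ?_)
  · have hvprev : v (σ.symm i) ≤ 0 := by
      rw [hv]
      exact max_le (max_le (hr _ 0) (hr _ 1)) (neg_nonpos.mpr (hα _ _ _))
    linarith [le_max_right (max (r (c i) 0) (r (c i) 1)) (-α (c (σ i)) (c i) (ℓ (σ i))),
      le_cellMax hK hprev (fun j => α (c i) j (ℓ i)),
      le_crossMax hK hnext (fun j l => α j (c i) l) (ℓ (σ i)), h2 (c i) (ℓ i)]
  · linarith [le_max_left (max (r (c i) 0) (r (c i) 1)) (-α (c (σ i)) (c i) (ℓ (σ i)))]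

end Converse

section Achievability

variable {K : ℕ} (α : Fin K → Fin K → Fin 2 → ℝ) (d : Fin K → Fin 2 → ℝ)

def edgeWeight (k j : Fin K) : ℝ :=
  max (cumDoF d k 0 - α k k 0 + α k j 0) (cumDoF d k 1 - α k k 1 + α k j 1)

def rootWeight (k : Fin K) : ℝ :=
  max (cumDoF d k 0 - α k k 0) (cumDoF d k 1 - α k k 1)

lemma le_edgeWeight (k j : Fin K) (li : Fin 2) :
    cumDoF d k li - α k k li + α k j li ≤ edgeWeight α d k j := by
  fin_cases li
  exacts [le_max_left _ _, le_max_right _ _]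

lemma exists_edgeWeight_eq (k j : Fin K) :
    ∃ li, edgeWeight α d k j = cumDoF d k li - (α k k li - α k j li) := by
  rcases max_choice (cumDoF d k 0 - α k k 0 + α k j 0) (cumDoF d k 1 - α k k 1 + α k j 1)
    with h | h
  exacts [⟨0, h.trans (by ring)⟩, ⟨1, h.trans (by ring)⟩]

lemma le_rootWeight (k : Fin K) (li : Fin 2) :
    cumDoF d k li - α k k li ≤ rootWeight α d k := by
  fin_cases li
  exacts [le_max_left _ _, le_max_right _ _]

variable {α d} (hK : 2 ≤ K)

lemma rootWeight_nonpos (hcell : ∀ i li, cumDoF d i li ≤ α i i li) (k : Fin K) :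
    rootWeight α d k ≤ 0 :=
  max_le (sub_nonpos.mpr (hcell k 0)) (sub_nonpos.mpr (hcell k 1))

lemma rootWeight_le_edgeWeight (hα : ∀ k i l, 0 ≤ α k i l) (k j : Fin K) :
    rootWeight α d k ≤ edgeWeight α d k j :=
  max_le_max (le_add_of_nonneg_right (hα k j 0)) (le_add_of_nonneg_right (hα k j 1))

lemma edgeWeight_cycle_nonpos
    (hcyc : ∀ m : ℕ, 2 ≤ m → m ≤ K → ∀ c : Fin m → Fin K, Function.Injective c →
      ∀ ℓ : Fin m → Fin 2, ∑ j, cumDoF d (c j) (ℓ j) ≤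
        ∑ j, (α (c j) (c j) (ℓ j) - α (c j) (c ((finRotate m).symm j)) (ℓ j)))
    {m : ℕ} (hm : 2 ≤ m) {v : Fin m → Fin K} (hv : Function.Injective v) :
    ∑ i, edgeWeight α d (v i) (v (finRotate m i)) ≤ 0 := by
  obtain ⟨n, rfl⟩ : ∃ n, m = n + 1 := ⟨m - 1, by omega⟩
  choose ℓ hℓ using fun i => exists_edgeWeight_eq α d (v i) (v (finRotate (n + 1) i))
  have hmK : n + 1 ≤ K := by simpa using Fintype.card_le_of_injective v hv
  -- The cyclic constraints run backwards along `c`, so traverse `v` in reverse.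
  have hrev := hcyc (n + 1) hm hmK (fun j => v (-j)) (hv.comp neg_injective) (fun j => ℓ (-j))
  have hL := Equiv.sum_comp (Equiv.neg (Fin (n + 1))) fun i => cumDoF d (v i) (ℓ i)
  have hR := Equiv.sum_comp (Equiv.neg (Fin (n + 1)))
    fun i => α (v i) (v i) (ℓ i) - α (v i) (v (finRotate (n + 1) i)) (ℓ i)
  simp only [Equiv.neg_apply] at hL hR
  simp only [neg_finRotate_symm_apply, hL, hR] at hrev
  rw [Finset.sum_congr rfl fun i _ => hℓ i, Finset.sum_sub_distrib]
  exact sub_nonpos.mpr hrev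

lemma crossMax_le_of_potential (hd0 : ∀ i l, 0 ≤ d i l) {x : Fin K → ℝ}
    (hx : ∀ k j, k ≠ j → edgeWeight α d k j + x j ≤ x k) (k : Fin K) (li : Fin 2) :
    crossMax hK k (fun j l => α k j li + ![x j, x j - d j 0] l) ≤
      x k + α k k li - cumDoF d k li := by
  refine crossMax_le hK fun j hj l => ?_
  have hr : ![x j, x j - d j 0] l ≤ x j := by
    fin_cases l
    · exact le_rfl
    · simpa using hd0 j 0
  linarith [le_edgeWeight α d k j li, hx k j hj.symm]

lemma mem_IBCr_of_potential (hd0 : ∀ i l, 0 ≤ d i l) {x : Fin K → ℝ}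
    (hxr : ∀ k, rootWeight α d k ≤ x k) (hx : ∀ k j, k ≠ j → edgeWeight α d k j + x j ≤ x k) :
    d ∈ IBCr hK α (fun _ => 1) fun k => ![x k, x k - d k 0] := by
  intro k
  have hcum (li : Fin 2) : d k 0 ≤ cumDoF d k li := by
    fin_cases li
    · exact (cumDoF_zero d k).ge
    · simpa [cumDoF_one] using hd0 k 1
  have hslack (li : Fin 2) :
      pplus (max (α k k li + (x k - d k 0))
        (crossMax hK k fun j l => α k j li + ![x j, x j - d j 0] l)) ≤
        α k k li + (x k - d k 0) :=
    pplus_le (max_le le_rfl (by linarith [crossMax_le_of_potential hK hd0 hx k li, hcum li]))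
      (by linarith [le_rootWeight α d k li, hxr k, hcum li])
  simp only [ibcBound1, ibcBound2, Equiv.Perm.one_apply, Matrix.cons_val_zero,
    Matrix.cons_val_one]
  refine ⟨⟨hd0 k 0, le_max_of_le_right (le_min ?_ ?_)⟩, hd0 k 1, le_max_of_le_right ?_⟩
  · linarith [hslack 0]
  · linarith [hslack 1]
  · have := pplus_le (crossMax_le_of_potential hK hd0 hx k 1)
      (by linarith [le_rootWeight α d k 1, hxr k])
    linarith [cumDoF_one d k]

end Achievability

theorem ibc_tin_optimal_region_general {K : ℕ} (hK : 2 ≤ K) (α : Fin K → Fin K → Fin 2 → ℝ)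
    (hα : ∀ k i l, 0 ≤ α k i l)
    (h1 : ∀ i : Fin K, α i i 0 + cellMax hK i (fun j => α i j 1) ≤ α i i 1)
    (h2 : ∀ i : Fin K, ∀ li : Fin 2,
      cellMax hK i (fun j => α i j li) + crossMax hK i (fun j l => α j i l) ≤ α i i li) :
    IBCstar hK α =
      {d | (∀ (i : Fin K) (li : Fin 2), 0 ≤ d i li) ∧
        (∀ (i : Fin K) (li : Fin 2),
          ∑ s ∈ Finset.univ.filter (fun s : Fin 2 => s ≤ li), d i s ≤ α i i li) ∧
        (∀ m : ℕ, 2 ≤ m → m ≤ K → ∀ c : Fin m → Fin K, Function.Injective c →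
          ∀ ℓ : Fin m → Fin 2,
            ∑ j : Fin m, ∑ s ∈ Finset.univ.filter (fun s : Fin 2 => s ≤ ℓ j), d (c j) s ≤
              ∑ j : Fin m,
                (α (c j) (c j) (ℓ j) - α (c j) (c ((finRotate m).symm j)) (ℓ j)))} := by
  ext d
  constructor
  · rintro ⟨π, r, hr, hd⟩
    refine ⟨fun i u => ?_, cumDoF_le_direct_of_mem_IBCr hK hα h1 hr hd,
      fun m hm _ c hc ℓ => sum_cumDoF_le_of_mem_IBCr hK hα h1 hr hd h2 hm hc ℓ⟩
    obtain ⟨l, rfl⟩ := (π i).surjective u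
    obtain rfl | rfl : l = 0 ∨ l = 1 := by omega
    exacts [(hd i).1.1, (hd i).2.1]
  · rintro ⟨hd0, hcell, hcyc⟩
    obtain ⟨x, hx0, hxr, hx⟩ := exists_potential_of_cycle_nonpos
      (fun _ hm _ hv => edgeWeight_cycle_nonpos hcyc hm hv) (rootWeight_nonpos hcell)
      (fun k j _ => rootWeight_le_edgeWeight hα k j)
    refine ⟨fun _ => 1, fun k => ![x k, x k - d k 0], fun k l => ?_,
      mem_IBCr_of_potential hK hd0 hxr hx⟩
    fin_cases l
    · exact hx0 k
    · simpa using (sub_le_self _ (hd0 k 0)).trans (hx0 k)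

/-- **Polyhedral characterization of `P^IBC⋆` under the TIN-optimality conditions**
(region part of Theorem 2). Under conditions (i) and (ii), the general
TIN-achievable GDoF region of the IBC equals the polyhedron described by the
nonnegativity constraints, the per-cell (degraded BC) constraints, and the
cyclic constraints over sequences of distinct cells. -/
theorem ibc_tin_optimal_region {K : ℕ} (hK : 2 ≤ K) (α : Fin K → Fin K → Fin 2 → ℝ)
    (hα : ∀ k i l, 0 ≤ α k i l) (hord : ∀ k, α k k 0 ≤ α k k 1)
    (h1 : ∀ i : Fin K, α i i 0 + cellMax hK i (fun j => α i j 1) ≤ α i i 1)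
    (h2 : ∀ i : Fin K, ∀ li : Fin 2,
      cellMax hK i (fun j => α i j li) + crossMax hK i (fun j l => α j i l) ≤ α i i li) :
    IBCstar hK α =
      {d | (∀ (i : Fin K) (li : Fin 2), 0 ≤ d i li) ∧
        (∀ (i : Fin K) (li : Fin 2),
          ∑ s ∈ Finset.univ.filter (fun s : Fin 2 => s ≤ li), d i s ≤ α i i li) ∧
        (∀ m : ℕ, 2 ≤ m → m ≤ K → ∀ c : Fin m → Fin K, Function.Injective c →
          ∀ ℓ : Fin m → Fin 2,
            ∑ j : Fin m, ∑ s ∈ Finset.univ.filter (fun s : Fin 2 => s ≤ ℓ j), d (c j) s ≤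
              ∑ j : Fin m,
                (α (c j) (c j) (ℓ j) - α (c j) (c ((finRotate m).symm j)) (ℓ j)))} :=
  ibc_tin_optimal_region_general hK α hα h1 h2
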